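/- (Crude variance bound, valid without mixing) For every k ≥ 0 the averaged QFedTD update direction satisfies E[‖v_k‖₂²] ≤ 64pζ'·E[δ_k²] + 96pζ'σ². -/

import Mathlib

open MeasureTheory ProbabilityTheory Finset
open scoped RealInnerProductSpace ProbabilityTheory

noncomputable section

/-- The TD update direction `g(θ, o)` for an observation tuple `o = (s, r, s')`:
`g(θ, o) = (r + γ⟪φ s', θ⟫ - ⟪φ s, θ⟫) • φ s`. -/
def tdDir {S : Type*} {m : ℕ} (γ : ℝ) (φ : S → EuclideanSpace ℝ (Fin m))
    (θ : EuclideanSpace ℝ (Fin m)) (o : S × ℝ × S) : EuclideanSpace ℝ (Fin m) :=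
  (o.2.1 + γ * ⟪φ o.2.2, θ⟫ - ⟪φ o.1, θ⟫) • φ o.1

/-- The steady-state TD direction `ḡ(θ) = ∑ s, π s • ∑ s', P s s' • g(θ, (s, R s, s'))`. -/
def tdBar {S : Type*} [Fintype S] {m : ℕ} (γ : ℝ) (φ : S → EuclideanSpace ℝ (Fin m))
    (P : S → S → ℝ) (pidist : S → ℝ) (R : S → ℝ) (θ : EuclideanSpace ℝ (Fin m)) :
    EuclideanSpace ℝ (Fin m) :=
  ∑ st : S, ∑ st' : S, (pidist st * P st st') • tdDir γ φ θ (st, R st, st')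


/-! By convexity of the squared norm, `‖v_k‖²` is at most the average of `b_{i,k} ‖h_{i,k}‖²`,
and independence of the Bernoulli masks turns its mean into `p · E‖h_{i,k}‖²`. The conditional
variance bound of the quantizer gives `E‖h‖² ≤ 2(ζ + 1) E‖g‖²`, and since `‖φ‖ ≤ 1` and `|γ| ≤ 1`
the TD direction grows at most linearly: `‖g(θ, o)‖ ≤ 2‖θ - θ*‖ + 3σ`. -/

theorem norm_sum_sq_le_card_mul_sum_sq {ι E : Type*} [SeminormedAddCommGroup E]
    (s : Finset ι) (x : ι → E) : ‖∑ i ∈ s, x i‖ ^ 2 ≤ #s * ∑ i ∈ s, ‖x i‖ ^ 2 :=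
  (pow_le_pow_left₀ (norm_nonneg _) (norm_sum_le s x) 2).trans sq_sum_le_card_mul_sum_sq

theorem norm_inv_card_smul_sum_smul_sq_le {ι E : Type*} [SeminormedAddCommGroup E]
    [NormedSpace ℝ E] (s : Finset ι) {b : ι → ℝ} (hb0 : ∀ i, 0 ≤ b i) (hb1 : ∀ i, b i ≤ 1)
    (x : ι → E) :
    ‖(#s : ℝ)⁻¹ • ∑ i ∈ s, b i • x i‖ ^ 2 ≤ (#s : ℝ)⁻¹ * ∑ i ∈ s, b i * ‖x i‖ ^ 2 := by
  have hbx : ∀ i, ‖b i • x i‖ ^ 2 ≤ b i * ‖x i‖ ^ 2 := fun i => by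
    rw [norm_smul, mul_pow, Real.norm_of_nonneg (hb0 i)]
    gcongr
    nlinarith [hb0 i, hb1 i]
  calc ‖(#s : ℝ)⁻¹ • ∑ i ∈ s, b i • x i‖ ^ 2
      = (#s : ℝ)⁻¹ ^ 2 * ‖∑ i ∈ s, b i • x i‖ ^ 2 := by
        rw [norm_smul, mul_pow, Real.norm_of_nonneg (by positivity)]
    _ ≤ (#s : ℝ)⁻¹ ^ 2 * (#s * ∑ i ∈ s, b i * ‖x i‖ ^ 2) := by
        gcongr
        exact (norm_sum_sq_le_card_mul_sum_sq s _).trans (by gcongr with i; exact hbx i)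
    _ = (#s : ℝ)⁻¹ * ∑ i ∈ s, b i * ‖x i‖ ^ 2 := by
        rcases eq_or_ne (#s : ℝ) 0 with hs | hs
        · simp [hs]
        · field_simp

section Probability

variable {Ω E : Type*} [NormedAddCommGroup E] {m0 : MeasurableSpace Ω} {μ : Measure[m0] Ω}

theorem memLp_const_smul_sum_smul [NormedSpace ℝ E] {p : ENNReal} {ι : Type*} (c : ℝ)
    (s : Finset ι) {b : ι → Ω → ℝ} {x : ι → Ω → E}
    (hb : ∀ i, AEStronglyMeasurable (b i) μ) (hb1 : ∀ i ω, ‖b i ω‖ ≤ 1)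
    (hx : ∀ i, MemLp (x i) p μ) : MemLp (fun ω => c • ∑ i ∈ s, b i ω • x i ω) p μ := by
  have hbx : ∀ i, MemLp (fun ω => b i ω • x i ω) p μ := fun i =>
    (hx i).of_le ((hb i).smul (hx i).1) <| ae_of_all _ fun ω => by
      rw [norm_smul]; exact mul_le_of_le_one_left (norm_nonneg _) (hb1 i ω)
  exact (memLp_finsetSum s fun i _ => hbx i).const_smul c

theorem memLp_of_iterate [NormedSpace ℝ E] [IsFiniteMeasure μ] {p : ENNReal}
    {θ v : ℕ → Ω → E} {θ0 : E} {α : ℝ} (hθ0 : ∀ ω, θ 0 ω = θ0)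
    (hθrec : ∀ k ω, θ (k + 1) ω = θ k ω + α • v k ω) (hv : ∀ k, MemLp (v k) p μ) :
    ∀ k, MemLp (θ k) p μ
  | 0 => funext hθ0 ▸ memLp_const θ0
  | k + 1 => funext (hθrec k) ▸ (memLp_of_iterate hθ0 hθrec hv k).add ((hv k).const_smul α)

theorem integral_eq_measureReal_of_eq_zero_or_one {b : Ω → ℝ} (hb : Measurable b)
    (h01 : ∀ ω, b ω = 0 ∨ b ω = 1) : ∫ ω, b ω ∂μ = μ.real {ω | b ω = 1} := by
  calc ∫ ω, b ω ∂μ = ∫ ω, {ω | b ω = 1}.indicator 1 ω ∂μ := by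
        congr 1; funext ω; rcases h01 ω with h | h <;> simp [h]
    _ = μ.real {ω | b ω = 1} := integral_indicator_one (hb (measurableSet_singleton 1))

theorem integral_mul_eq_mul_integral_of_bernoulli {b X : Ω → ℝ} {p : ℝ} (hb : Measurable b)
    (h01 : ∀ ω, b ω = 0 ∨ b ω = 1) (hbp : μ {ω | b ω = 1} = ENNReal.ofReal p) (hp : 0 ≤ p)
    (hX : AEStronglyMeasurable X μ) (hind : IndepFun b X μ) :
    ∫ ω, b ω * X ω ∂μ = p * ∫ ω, X ω ∂μ := by
  have hEb : ∫ ω, b ω ∂μ = p := by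
    rw [integral_eq_measureReal_of_eq_zero_or_one hb h01, measureReal_def, hbp,
      ENNReal.toReal_ofReal hp]
  rw [← hEb]
  exact hind.integral_mul_eq_mul_integral hb.aestronglyMeasurable hX

theorem integral_norm_inv_card_smul_sum_smul_sq_le [NormedSpace ℝ E] {ι : Type*} (s : Finset ι)
    {b : ι → Ω → ℝ} {x : ι → Ω → E} {p B : ℝ} (hb : ∀ i, Measurable (b i))
    (h01 : ∀ i ω, b i ω = 0 ∨ b i ω = 1) (hbp : ∀ i, μ {ω | b i ω = 1} = ENNReal.ofReal p)
    (hp : 0 ≤ p) (hx : ∀ i, MemLp (x i) 2 μ)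
    (hind : ∀ i, IndepFun (b i) (fun ω => ‖x i ω‖ ^ 2) μ)
    (hB : ∀ i ∈ s, ∫ ω, ‖x i ω‖ ^ 2 ∂μ ≤ B) (hB0 : 0 ≤ B) :
    ∫ ω, ‖(#s : ℝ)⁻¹ • ∑ i ∈ s, b i ω • x i ω‖ ^ 2 ∂μ ≤ p * B := by
  have hb0 : ∀ i ω, 0 ≤ b i ω := fun i ω => by rcases h01 i ω with h | h <;> simp [h]
  have hb1 : ∀ i ω, b i ω ≤ 1 := fun i ω => by rcases h01 i ω with h | h <;> simp [h]
  have hint : ∀ i, Integrable (fun ω => b i ω * ‖x i ω‖ ^ 2) μ := fun i =>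
    ((hx i).integrable_norm_pow two_ne_zero).bdd_mul (hb i).aestronglyMeasurable
      (ae_of_all _ fun ω => by rw [Real.norm_of_nonneg (hb0 i ω)]; exact hb1 i ω)
  calc ∫ ω, ‖(#s : ℝ)⁻¹ • ∑ i ∈ s, b i ω • x i ω‖ ^ 2 ∂μ
      ≤ ∫ ω, (#s : ℝ)⁻¹ * ∑ i ∈ s, b i ω * ‖x i ω‖ ^ 2 ∂μ :=
        integral_mono_of_nonneg (ae_of_all _ fun _ => sq_nonneg _)
          ((integrable_finsetSum _ fun i _ => hint i).const_mul _)
          (ae_of_all _ fun ω => norm_inv_card_smul_sum_smul_sq_le s (hb0 · ω) (hb1 · ω) _)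
    _ = (#s : ℝ)⁻¹ * ∑ i ∈ s, p * ∫ ω, ‖x i ω‖ ^ 2 ∂μ := by
        rw [integral_const_mul, integral_finsetSum _ fun i _ => hint i]
        congr 1
        refine sum_congr rfl fun i _ => integral_mul_eq_mul_integral_of_bernoulli (hb i)
          (h01 i) (hbp i) hp ((hx i).1.norm.pow 2) (hind i)
    _ ≤ (#s : ℝ)⁻¹ * ∑ i ∈ s, p * B := by gcongr with i hi; exact hB i hi
    _ ≤ p * B := by
        rw [sum_const, nsmul_eq_mul, ← mul_assoc]
        exact mul_le_of_le_one_left (by positivity) (inv_mul_le_one_of_le₀ le_rfl (by positivity))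

theorem integral_sq_norm_sub_le_of_condExp_le [IsFiniteMeasure μ] {m : MeasurableSpace Ω}
    (hm : m ≤ m0) {h G : Ω → E} {ζ : ℝ}
    (hG : Integrable (fun ω => ‖G ω‖ ^ 2) μ)
    (hvar : ∀ᵐ ω ∂μ, μ[fun ω => ‖h ω - G ω‖ ^ 2 | m] ω ≤ ζ * ‖G ω‖ ^ 2) :
    ∫ ω, ‖h ω - G ω‖ ^ 2 ∂μ ≤ ζ * ∫ ω, ‖G ω‖ ^ 2 ∂μ := by
  rw [← integral_condExp hm, ← integral_const_mul]
  exact integral_mono_ae integrable_condExp (hG.const_mul ζ) hvar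

theorem integral_sq_norm_le_of_condExp_le [IsFiniteMeasure μ] {m : MeasurableSpace Ω}
    (hm : m ≤ m0) {h G : Ω → E} {ζ : ℝ} (hh : MemLp h 2 μ) (hG : MemLp G 2 μ)
    (hvar : ∀ᵐ ω ∂μ, μ[fun ω => ‖h ω - G ω‖ ^ 2 | m] ω ≤ ζ * ‖G ω‖ ^ 2) :
    ∫ ω, ‖h ω‖ ^ 2 ∂μ ≤ 2 * (ζ + 1) * ∫ ω, ‖G ω‖ ^ 2 ∂μ := by
  have hG2 := hG.integrable_norm_pow two_ne_zero
  have hhG2 : Integrable (fun ω => ‖h ω - G ω‖ ^ 2) μ :=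
    (hh.sub hG).integrable_norm_pow two_ne_zero
  have hsplit : ∀ ω, ‖h ω‖ ^ 2 ≤ 2 * ‖h ω - G ω‖ ^ 2 + 2 * ‖G ω‖ ^ 2 := fun ω => by
    have : ‖h ω‖ ≤ ‖h ω - G ω‖ + ‖G ω‖ := by simpa using norm_add_le (h ω - G ω) (G ω)
    nlinarith [add_sq_le (a := ‖h ω - G ω‖) (b := ‖G ω‖), norm_nonneg (h ω)]
  calc ∫ ω, ‖h ω‖ ^ 2 ∂μ ≤ ∫ ω, 2 * ‖h ω - G ω‖ ^ 2 + 2 * ‖G ω‖ ^ 2 ∂μ :=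
        integral_mono (hh.integrable_norm_pow two_ne_zero)
          ((hhG2.const_mul 2).add (hG2.const_mul 2)) hsplit
    _ = 2 * ∫ ω, ‖h ω - G ω‖ ^ 2 ∂μ + 2 * ∫ ω, ‖G ω‖ ^ 2 ∂μ := by
        rw [integral_add (hhG2.const_mul 2) (hG2.const_mul 2), integral_const_mul,
          integral_const_mul]
    _ ≤ 2 * (ζ + 1) * ∫ ω, ‖G ω‖ ^ 2 ∂μ := by
        nlinarith [integral_sq_norm_sub_le_of_condExp_le hm hG2 hvar]

end Probability

section TD

variable {S : Type*} {d : ℕ} {γ : ℝ} {φ : S → EuclideanSpace ℝ (Fin d)}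

theorem norm_tdDir_le (hφ : ∀ s, ‖φ s‖ ≤ 1) (hγ : |γ| ≤ 1) (θ : EuclideanSpace ℝ (Fin d))
    (o : S × ℝ × S) : ‖tdDir γ φ θ o‖ ≤ |o.2.1| + 2 * ‖θ‖ := by
  have hinner : ∀ s, |⟪φ s, θ⟫| ≤ ‖θ‖ := fun s =>
    (abs_real_inner_le_norm _ _).trans (mul_le_of_le_one_left (norm_nonneg _) (hφ s))
  calc ‖tdDir γ φ θ o‖ = |o.2.1 + γ * ⟪φ o.2.2, θ⟫ - ⟪φ o.1, θ⟫| * ‖φ o.1‖ := by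
        rw [tdDir, norm_smul, Real.norm_eq_abs]
    _ ≤ |o.2.1 + γ * ⟪φ o.2.2, θ⟫ - ⟪φ o.1, θ⟫| :=
        mul_le_of_le_one_right (abs_nonneg _) (hφ _)
    _ ≤ |o.2.1| + |γ| * |⟪φ o.2.2, θ⟫| + |⟪φ o.1, θ⟫| := by
        rw [← abs_mul]
        exact (abs_sub _ _).trans (by gcongr; exact abs_add_le _ _)
    _ ≤ |o.2.1| + 2 * ‖θ‖ := by
        nlinarith [hinner o.2.2, hinner o.1, abs_nonneg γ, abs_nonneg ⟪φ o.2.2, θ⟫]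

theorem norm_tdDir_le_of_le (hφ : ∀ s, ‖φ s‖ ≤ 1) (hγ : |γ| ≤ 1) {c : ℝ}
    {θ θstar : EuclideanSpace ℝ (Fin d)} (hθstar : ‖θstar‖ ≤ c) {o : S × ℝ × S}
    (hr : |o.2.1| ≤ c) : ‖tdDir γ φ θ o‖ ≤ 2 * ‖θ - θstar‖ + 3 * c := by
  linarith [norm_tdDir_le hφ hγ θ o, norm_sub_norm_le θ θstar]

variable {Ω : Type*} {m0 : MeasurableSpace Ω} {μ : Measure[m0] Ω} [IsProbabilityMeasure μ]
  {c : ℝ} {θstar : EuclideanSpace ℝ (Fin d)} {θ : Ω → EuclideanSpace ℝ (Fin d)}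
  {o : Ω → S × ℝ × S}

theorem memLp_tdDir (hφ : ∀ s, ‖φ s‖ ≤ 1) (hγ : |γ| ≤ 1) (hθstar : ‖θstar‖ ≤ c)
    (hr : ∀ ω, |(o ω).2.1| ≤ c) (hθ : MemLp θ 2 μ)
    (hG : AEStronglyMeasurable (fun ω => tdDir γ φ (θ ω) (o ω)) μ) :
    MemLp (fun ω => tdDir γ φ (θ ω) (o ω)) 2 μ :=
  (((hθ.sub (memLp_const θstar)).norm.const_mul 2).add (memLp_const (3 * c))).of_le hG <|
    ae_of_all _ fun ω => (norm_tdDir_le_of_le hφ hγ hθstar (hr ω)).trans (le_abs_self _)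

theorem integral_sq_norm_tdDir_le (hφ : ∀ s, ‖φ s‖ ≤ 1) (hγ : |γ| ≤ 1)
    (hθstar : ‖θstar‖ ≤ c) (hr : ∀ ω, |(o ω).2.1| ≤ c) (hθ : MemLp θ 2 μ)
    (hG : AEStronglyMeasurable (fun ω => tdDir γ φ (θ ω) (o ω)) μ) :
    ∫ ω, ‖tdDir γ φ (θ ω) (o ω)‖ ^ 2 ∂μ ≤ 8 * ∫ ω, ‖θ ω - θstar‖ ^ 2 ∂μ + 18 * c ^ 2 := by
  have hδ : Integrable (fun ω => ‖θ ω - θstar‖ ^ 2) μ :=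
    (hθ.sub (memLp_const θstar)).integrable_norm_pow two_ne_zero
  calc ∫ ω, ‖tdDir γ φ (θ ω) (o ω)‖ ^ 2 ∂μ ≤ ∫ ω, 8 * ‖θ ω - θstar‖ ^ 2 + 18 * c ^ 2 ∂μ := by
        refine integral_mono ((memLp_tdDir hφ hγ hθstar hr hθ hG).integrable_norm_pow two_ne_zero)
          ((hδ.const_mul 8).add (integrable_const _)) fun ω => ?_
        have hle := norm_tdDir_le_of_le hφ hγ (θ := θ ω) hθstar (hr ω)
        nlinarith [add_sq_le (a := 2 * ‖θ ω - θstar‖) (b := 3 * c),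
          pow_le_pow_left₀ (norm_nonneg _) hle 2]
    _ = 8 * ∫ ω, ‖θ ω - θstar‖ ^ 2 ∂μ + 18 * c ^ 2 := by
        rw [integral_add (hδ.const_mul 8) (integrable_const _), integral_const_mul,
          integral_const, probReal_univ, one_smul]

theorem integral_sq_norm_le_of_condExp_tdDir_le {m : MeasurableSpace Ω} (hm : m ≤ m0)
    (hφ : ∀ s, ‖φ s‖ ≤ 1) (hγ : |γ| ≤ 1) (hθstar : ‖θstar‖ ≤ c) (hr : ∀ ω, |(o ω).2.1| ≤ c)
    (hθ : MemLp θ 2 μ) {h : Ω → EuclideanSpace ℝ (Fin d)} {ζ : ℝ} (hζ : 0 ≤ ζ) (hh : MemLp h 2 μ)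
    (hmean : μ[h | m] =ᵐ[μ] fun ω => tdDir γ φ (θ ω) (o ω))
    (hvar : ∀ᵐ ω ∂μ, μ[fun ω => ‖h ω - tdDir γ φ (θ ω) (o ω)‖ ^ 2 | m] ω
      ≤ ζ * ‖tdDir γ φ (θ ω) (o ω)‖ ^ 2) :
    ∫ ω, ‖h ω‖ ^ 2 ∂μ ≤ 2 * (ζ + 1) * (8 * ∫ ω, ‖θ ω - θstar‖ ^ 2 ∂μ + 18 * c ^ 2) := by
  have hG := integrable_condExp.aestronglyMeasurable.congr hmean
  calc ∫ ω, ‖h ω‖ ^ 2 ∂μ ≤ 2 * (ζ + 1) * ∫ ω, ‖tdDir γ φ (θ ω) (o ω)‖ ^ 2 ∂μ :=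
        integral_sq_norm_le_of_condExp_le hm hh (memLp_tdDir hφ hγ hθstar hr hθ hG) hvar
    _ ≤ 2 * (ζ + 1) * (8 * ∫ ω, ‖θ ω - θstar‖ ^ 2 ∂μ + 18 * c ^ 2) := by
        gcongr
        exact integral_sq_norm_tdDir_le hφ hγ hθstar hr hθ hG

end TD

theorem stmt11_general
    (S : Type*) [MeasurableSpace S] (m N : ℕ)
    (Ω : Type*) [MeasureSpace Ω] [IsProbabilityMeasure (ℙ : Measure Ω)]
    (γ : ℝ) (hγ : γ ∈ Set.Ioo (0 : ℝ) 1)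
    (φ : S → EuclideanSpace ℝ (Fin m)) (hφ : ∀ st : S, ‖φ st‖ ≤ 1)
    (R : S → ℝ) (rbar : ℝ) (hR : ∀ st : S, |R st| ≤ rbar)
    (θstar : EuclideanSpace ℝ (Fin m))
    (σ : ℝ) (hσ : σ = max 1 (max rbar ‖θstar‖))
    (p : ℝ) (hp : p ∈ Set.Ioc (0 : ℝ) 1)
    (ζ : ℝ) (ζ' : ℝ) (hζ' : ζ' = max 1 ζ)
    (α : ℝ)
    (s : Fin N → ℕ → Ω → S) (hs_meas : ∀ i k, Measurable (s i k))
    (b : Fin N → ℕ → Ω → ℝ) (hb_meas : ∀ i k, Measurable (b i k))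
    (h : Fin N → ℕ → Ω → EuclideanSpace ℝ (Fin m)) (hh_meas : ∀ i k, Measurable (h i k))
    (hh_int : ∀ i k, Integrable (fun x => ‖h i k x‖ ^ 2))
    (o : Fin N → ℕ → Ω → S × ℝ × S)
    (ho : ∀ i k x, o i k x = (s i k x, R (s i k x), s i (k + 1) x))
    (g : Fin N → ℕ → EuclideanSpace ℝ (Fin m) → Ω → EuclideanSpace ℝ (Fin m))
    (hg : ∀ i k θ' x, g i k θ' x = tdDir γ φ θ' (o i k x))
    (v : ℕ → Ω → EuclideanSpace ℝ (Fin m))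
    (hv : ∀ k x, v k x = (N : ℝ)⁻¹ • ∑ i : Fin N, b i k x • h i k x)
    (θ : ℕ → Ω → EuclideanSpace ℝ (Fin m)) (θ0 : EuclideanSpace ℝ (Fin m))
    (hθ0 : ∀ x, θ 0 x = θ0)
    (hθrec : ∀ k x, θ (k + 1) x = θ k x + α • v k x)
    (hb01 : ∀ i k x, b i k x = 0 ∨ b i k x = 1)
    (hbp : ∀ i k, (ℙ : Measure Ω) {x | b i k x = 1} = ENNReal.ofReal p)
    (hb_indep : ∀ (i : Fin N) (k : ℕ), ProbabilityTheory.Indep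
      (MeasurableSpace.comap (b i k) inferInstance)
      ((⨆ (j : Fin N) (l : ℕ), MeasurableSpace.comap (s j l) inferInstance) ⊔
        (⨆ (jl : Fin N × ℕ) (_ : jl ≠ (i, k)),
          MeasurableSpace.comap (b jl.1 jl.2) inferInstance) ⊔
        (⨆ (j : Fin N) (l : ℕ) (_ : l ≤ k), MeasurableSpace.comap (h j l) inferInstance)) ℙ)
    (hQmean : ∀ (i : Fin N) (k : ℕ),
      (𝔼[h i k |
          (⨆ (j : Fin N) (l : ℕ), MeasurableSpace.comap (s j l) inferInstance) ⊔
          (⨆ (j : Fin N) (l : ℕ), MeasurableSpace.comap (b j l) inferInstance) ⊔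
          (⨆ (j : Fin N) (l : ℕ) (_ : l < k), MeasurableSpace.comap (h j l) inferInstance) ⊔
          (⨆ (j : Fin N) (_ : j ≠ i), MeasurableSpace.comap (h j k) inferInstance)])
        =ᵐ[ℙ] fun x => g i k (θ k x) x)
    (hQvar : ∀ (i : Fin N) (k : ℕ),
      ∀ᵐ x ∂(ℙ : Measure Ω),
        (𝔼[(fun y => ‖h i k y - g i k (θ k y) y‖ ^ 2) |
            (⨆ (j : Fin N) (l : ℕ), MeasurableSpace.comap (s j l) inferInstance) ⊔
            (⨆ (j : Fin N) (l : ℕ), MeasurableSpace.comap (b j l) inferInstance) ⊔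
            (⨆ (j : Fin N) (l : ℕ) (_ : l < k), MeasurableSpace.comap (h j l) inferInstance) ⊔
            (⨆ (j : Fin N) (_ : j ≠ i), MeasurableSpace.comap (h j k) inferInstance)]) x
          ≤ ζ * ‖g i k (θ k x) x‖ ^ 2)
    :
    ∀ k : ℕ,
      𝔼[fun x => ‖v k x‖ ^ 2]
        ≤ 64 * p * ζ' * 𝔼[fun x => ‖θ k x - θstar‖ ^ 2] + 96 * p * ζ' * σ ^ 2 := by
  intro k
  have hγ' : |γ| ≤ 1 := abs_le.2 ⟨by linarith [hγ.1], hγ.2.le⟩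
  have hrσ : rbar ≤ σ := hσ ▸ le_max_of_le_right (le_max_left _ _)
  have hθσ : ‖θstar‖ ≤ σ := hσ ▸ le_max_of_le_right (le_max_right _ _)
  have hζ'1 : 1 ≤ ζ' := hζ' ▸ le_max_left _ _
  have hζζ' : ζ ≤ ζ' := hζ' ▸ le_max_right _ _
  have hb1 : ∀ i k x, ‖b i k x‖ ≤ 1 := fun i k x => by rcases hb01 i k x with hx | hx <;> simp [hx]
  have hhL2 : ∀ i k, MemLp (h i k) 2 := fun i k =>
    (memLp_two_iff_integrable_sq_norm (hh_meas i k).aestronglyMeasurable).2 (hh_int i k)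
  have hθL2 : MemLp (θ k) 2 := memLp_of_iterate hθ0 hθrec (fun k => by
    rw [funext (hv k)]
    exact memLp_const_smul_sum_smul _ _ (fun i => (hb_meas i k).aestronglyMeasurable)
      (hb1 · k) (hhL2 · k)) k
  set A := ∫ x, ‖θ k x - θstar‖ ^ 2
  have hagent : ∀ i, ∫ x, ‖h i k x‖ ^ 2 ≤ 2 * (ζ' + 1) * (8 * A + 18 * σ ^ 2) := fun i => by
    have hmean := hQmean i k
    have hvar := hQvar i k
    simp only [hg] at hmean hvar
    refine integral_sq_norm_le_of_condExp_tdDir_le ?_ hφ hγ' hθσ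
      (fun x => by rw [ho]; exact (hR _).trans hrσ) hθL2 (by linarith) (hhL2 i k) hmean
      (hvar.mono fun x hx => hx.trans (by gcongr))
    refine sup_le (sup_le (sup_le ?_ ?_) ?_) ?_ <;> simp only [iSup_le_iff]
    exacts [fun j l => (hs_meas j l).comap_le, fun j l => (hb_meas j l).comap_le,
      fun j l _ => (hh_meas j l).comap_le, fun j _ => (hh_meas j k).comap_le]
  have hind : ∀ i, IndepFun (b i k) (fun x => ‖h i k x‖ ^ 2) := fun i =>
    ((IndepFun_iff_Indep _ _ _).2 (indep_of_indep_of_le_right (hb_indep i k)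
      (le_sup_of_le_right (le_iSup₂_of_le i k (le_iSup_of_le le_rfl le_rfl))))).comp
      measurable_id (measurable_norm.pow_const 2)
  have hA : 0 ≤ A := integral_nonneg fun _ => sq_nonneg _
  have hpζ' : 0 ≤ p * ζ' := mul_nonneg hp.1.le (by linarith)
  calc 𝔼[fun x => ‖v k x‖ ^ 2]
      = ∫ x, ‖((univ : Finset (Fin N)).card : ℝ)⁻¹ • ∑ i, b i k x • h i k x‖ ^ 2 := by
        simp only [hv, card_univ, Fintype.card_fin]
    _ ≤ p * (2 * (ζ' + 1) * (8 * A + 18 * σ ^ 2)) :=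
        integral_norm_inv_card_smul_sum_smul_sq_le _ (hb_meas · k) (hb01 · k) (hbp · k) hp.1.le
          (hhL2 · k) hind (fun i _ => hagent i) (by positivity)
    _ ≤ 64 * p * ζ' * A + 96 * p * ζ' * σ ^ 2 := by
        nlinarith [mul_nonneg hpζ' hA, mul_nonneg hpζ' (sq_nonneg σ), mul_nonneg hp.1.le hA,
          mul_nonneg hp.1.le (sq_nonneg σ)]

/-- **Crude variance bound, valid without mixing.** -/
theorem stmt11
    (S : Type*) [Fintype S] [Nonempty S] [MeasurableSpace S] (m N : ℕ) (hN : 0 < N)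
    (Ω : Type*) [MeasureSpace Ω] [IsProbabilityMeasure (ℙ : Measure Ω)]
    (γ : ℝ) (hγ : γ ∈ Set.Ioo (0 : ℝ) 1)
    (φ : S → EuclideanSpace ℝ (Fin m)) (hφ : ∀ st : S, ‖φ st‖ ≤ 1)
    (hrank : Function.Injective fun θ' : EuclideanSpace ℝ (Fin m) => fun st : S => ⟪φ st, θ'⟫)
    (P : S → S → ℝ) (hP0 : ∀ st st' : S, 0 ≤ P st st')
    (hP1 : ∀ st : S, ∑ st' : S, P st st' = 1)
    (pidist : S → ℝ) (hpi0 : ∀ st : S, 0 < pidist st) (hpi1 : ∑ st : S, pidist st = 1)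
    (hstat : ∀ st' : S, ∑ st : S, pidist st * P st st' = pidist st')
    (R : S → ℝ) (rbar : ℝ) (hrbar : 0 < rbar) (hR : ∀ st : S, |R st| ≤ rbar)
    (ω : ℝ) (hω : ω ∈ Set.Ioo (0 : ℝ) 1)
    (hωmin : ∀ θ' : EuclideanSpace ℝ (Fin m), ω * ‖θ'‖ ^ 2 ≤ ∑ st : S, pidist st * ⟪φ st, θ'⟫ ^ 2)
    (θstar : EuclideanSpace ℝ (Fin m)) (hθstar : tdBar γ φ P pidist R θstar = 0)
    (σ : ℝ) (hσ : σ = max 1 (max rbar ‖θstar‖))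
    (p : ℝ) (hp : p ∈ Set.Ioc (0 : ℝ) 1)
    (ζ : ℝ) (hζ : 0 ≤ ζ) (ζ' : ℝ) (hζ' : ζ' = max 1 ζ)
    (α : ℝ) (hα : α ∈ Set.Ioo (0 : ℝ) 1)
    (q : ℕ) (hq : 2 ≤ q) (τ : ℕ) (hτ : 1 ≤ τ)
    (s : Fin N → ℕ → Ω → S) (hs_meas : ∀ i k, Measurable (s i k))
    (b : Fin N → ℕ → Ω → ℝ) (hb_meas : ∀ i k, Measurable (b i k))
    (h : Fin N → ℕ → Ω → EuclideanSpace ℝ (Fin m)) (hh_meas : ∀ i k, Measurable (h i k))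
    (hh_int : ∀ i k, Integrable (fun x => ‖h i k x‖ ^ 2))
    (o : Fin N → ℕ → Ω → S × ℝ × S)
    (ho : ∀ i k x, o i k x = (s i k x, R (s i k x), s i (k + 1) x))
    (g : Fin N → ℕ → EuclideanSpace ℝ (Fin m) → Ω → EuclideanSpace ℝ (Fin m))
    (hg : ∀ i k θ' x, g i k θ' x = tdDir γ φ θ' (o i k x))
    (v : ℕ → Ω → EuclideanSpace ℝ (Fin m))
    (hv : ∀ k x, v k x = (N : ℝ)⁻¹ • ∑ i : Fin N, b i k x • h i k x)
    (θ : ℕ → Ω → EuclideanSpace ℝ (Fin m)) (θ0 : EuclideanSpace ℝ (Fin m))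
    (hθ0 : ∀ x, θ 0 x = θ0)
    (hθrec : ∀ k x, θ (k + 1) x = θ k x + α • v k x)
    (hmarkov : ∀ (i : Fin N) (k : ℕ) (f : S → ℝ),
      (𝔼[(fun x => f (s i (k + 1) x)) |
          ⨆ (j : ℕ) (_ : j ≤ k), MeasurableSpace.comap (s i j) inferInstance])
        =ᵐ[ℙ] fun x => ∑ st' : S, P (s i k x) st' * f st')
    (hchains_indep : ProbabilityTheory.iIndep
      (fun i : Fin N => ⨆ k : ℕ, MeasurableSpace.comap (s i k) inferInstance) ℙ)
    (hb01 : ∀ i k x, b i k x = 0 ∨ b i k x = 1)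
    (hbp : ∀ i k, (ℙ : Measure Ω) {x | b i k x = 1} = ENNReal.ofReal p)
    (hb_indep : ∀ (i : Fin N) (k : ℕ), ProbabilityTheory.Indep
      (MeasurableSpace.comap (b i k) inferInstance)
      ((⨆ (j : Fin N) (l : ℕ), MeasurableSpace.comap (s j l) inferInstance) ⊔
        (⨆ (jl : Fin N × ℕ) (_ : jl ≠ (i, k)),
          MeasurableSpace.comap (b jl.1 jl.2) inferInstance) ⊔
        (⨆ (j : Fin N) (l : ℕ) (_ : l ≤ k), MeasurableSpace.comap (h j l) inferInstance)) ℙ)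
    (hQmean : ∀ (i : Fin N) (k : ℕ),
      (𝔼[h i k |
          (⨆ (j : Fin N) (l : ℕ), MeasurableSpace.comap (s j l) inferInstance) ⊔
          (⨆ (j : Fin N) (l : ℕ), MeasurableSpace.comap (b j l) inferInstance) ⊔
          (⨆ (j : Fin N) (l : ℕ) (_ : l < k), MeasurableSpace.comap (h j l) inferInstance) ⊔
          (⨆ (j : Fin N) (_ : j ≠ i), MeasurableSpace.comap (h j k) inferInstance)])
        =ᵐ[ℙ] fun x => g i k (θ k x) x)
    (hQvar : ∀ (i : Fin N) (k : ℕ),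
      ∀ᵐ x ∂(ℙ : Measure Ω),
        (𝔼[(fun y => ‖h i k y - g i k (θ k y) y‖ ^ 2) |
            (⨆ (j : Fin N) (l : ℕ), MeasurableSpace.comap (s j l) inferInstance) ⊔
            (⨆ (j : Fin N) (l : ℕ), MeasurableSpace.comap (b j l) inferInstance) ⊔
            (⨆ (j : Fin N) (l : ℕ) (_ : l < k), MeasurableSpace.comap (h j l) inferInstance) ⊔
            (⨆ (j : Fin N) (_ : j ≠ i), MeasurableSpace.comap (h j k) inferInstance)]) x
          ≤ ζ * ‖g i k (θ k x) x‖ ^ 2)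
    (hmix : ∀ (θ' : EuclideanSpace ℝ (Fin m)) (i : Fin N) (k : ℕ), τ ≤ k →
      ∀ᵐ x ∂(ℙ : Measure Ω),
        ‖(𝔼[g i k θ' | MeasurableSpace.comap (o i (k - τ)) inferInstance]) x
          - tdBar γ φ P pidist R θ'‖ ≤ α ^ q * (‖θ'‖ + 1))
    :
    ∀ k : ℕ,
      𝔼[fun x => ‖v k x‖ ^ 2]
        ≤ 64 * p * ζ' * 𝔼[fun x => ‖θ k x - θstar‖ ^ 2] + 96 * p * ζ' * σ ^ 2 :=
  stmt11_general S m N Ω γ hγ φ hφ R rbar hR θstar σ hσ p hp ζ ζ' hζ' α s hs_meas b hb_meas h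
    hh_meas hh_int o ho g hg v hv θ θ0 hθ0 hθrec hb01 hbp hb_indep hQmean hQvar
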